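/- arXiv:1202.5049 — 3 statements merged into one kernel-verified Lean document; each statement's English description precedes it below -/
import Mathlib

section
/- Let K be a directed full component with centre v and sink u. Then K is feasible with respect to (x,y) if and only if (a) x_a > 0 for every arc a of K, (b) every source of K lies in 𝒞, (c) K has at most one source in each member of 𝒳, and (d) K has at least one source in each member of 𝒴. -/
open Classical

noncomputable section

variable {V : Type*} [Fintype V] [DecidableEq V]

/-- A directed full component of a Steiner tree instance `(G, R)`: a subtree `H` of `G`
whose leaves are exactly the terminals it contains (internal vertices are Steiner
vertices), together with an orientation of all its edges towards a chosen terminal,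
the sink.  The orientation is recorded by the arc set `arcs`, oriented towards the
sink, i.e. every non-sink vertex has exactly one outgoing arc and the sink has none. -/
structure DirFullComp (G : SimpleGraph V) (R : Set V) where
  H : G.Subgraph
  nonempty : H.verts.Nonempty
  isTree : H.coe.IsTree
  leaf_iff : ∀ v ∈ H.verts, (v ∈ R ↔ (H.neighborSet v).ncard = 1)
  sink : V
  sink_mem : sink ∈ H.verts
  sink_terminal : sink ∈ R
  arcs : Finset (V × V)
  arcs_adj : ∀ a ∈ arcs, H.Adj a.1 a.2
  arcs_total : ∀ u v : V, H.Adj u v → (u, v) ∈ arcs ∨ (v, u) ∈ arcs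
  arcs_antisymm : ∀ u v : V, (u, v) ∈ arcs → (v, u) ∉ arcs
  toward_sink : ∀ v ∈ H.verts, v ≠ sink → ∃! w : V, (v, w) ∈ arcs
  sink_no_out : ∀ w : V, (sink, w) ∉ arcs

namespace DirFullComp

variable {G : SimpleGraph V} {R : Set V}

/-- The sources of a directed full component: its terminals other than the sink. -/
def sources (K : DirFullComp G R) : Set V := (K.H.verts ∩ R) \ {K.sink}

/-- `K` crosses `U` iff its sink lies outside `U` and some source lies in `U`. -/
def crosses (K : DirFullComp G R) (U : Set V) : Prop :=
  K.sink ∉ U ∧ (K.sources ∩ U).Nonempty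

/-- `Δ_K⁺(U) ∈ {0,1}`. -/
def cross01 (K : DirFullComp G R) (U : Set V) : ℝ := if K.crosses U then 1 else 0

/-- Characteristic vector `χ_K ∈ ℝ^A` of the arc set of `K`. -/
def chi (K : DirFullComp G R) : V × V → ℝ := fun a => if a ∈ K.arcs then 1 else 0

/-- Cost `c_K` of the component w.r.t. arc costs `c`. -/
def cost (K : DirFullComp G R) (c : V → V → ℝ) : ℝ := ∑ a ∈ K.arcs, c a.1 a.2

/-- In a quasi-bipartite instance without terminal-terminal edges, every full
component has a unique Steiner vertex, its centre. -/
def IsCentre (K : DirFullComp G R) (v : V) : Prop := K.H.verts \ R = {v}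

end DirFullComp

instance (G : SimpleGraph V) : Finite G.Subgraph := by
  apply Finite.of_injective (fun H => (H.verts, H.Adj))
  intro H₁ H₂ h
  cases H₁; cases H₂
  simp only [Prod.mk.injEq] at h
  obtain ⟨h1, h2⟩ := h
  subst h1; subst h2; rfl

instance (G : SimpleGraph V) (R : Set V) : Finite (DirFullComp G R) := by
  apply Finite.of_injective (fun K : DirFullComp G R => (K.H, K.sink, K.arcs))
  intro K₁ K₂ h
  cases K₁; cases K₂
  simp only [Prod.mk.injEq] at h
  obtain ⟨h1, h2, h3⟩ := h
  subst h1; subst h2; subst h3; rfl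
/-- The arc set `A` of the bidirected digraph `D` obtained from `G`. -/
def arcSet (G : SimpleGraph V) : Set (V × V) := {a | G.Adj a.1 a.2}

/-- `δ⁺(U)`: arcs of `D` with tail in `U` and head outside `U`. -/
def outArcs (G : SimpleGraph V) (U : Set V) : Set (V × V) :=
  {a | G.Adj a.1 a.2 ∧ a.1 ∈ U ∧ a.2 ∉ U}

/-- `x(δ⁺(U))`. -/
def cutx (G : SimpleGraph V) (x : V × V → ℝ) (U : Set V) : ℝ :=
  ∑ᶠ a ∈ outArcs G U, x a

/-- `y(Δ⁺(U))`: total `y`-weight of directed full components crossing `U`. -/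
def cuty (G : SimpleGraph V) (R : Set V) (y : DirFullComp G R → ℝ) (U : Set V) : ℝ :=
  ∑ᶠ K ∈ {K : DirFullComp G R | K.crosses U}, y K

/-- A set is valid if it contains a terminal but not the root. -/
def Valid (R : Set V) (r : V) (U : Set V) : Prop := (U ∩ R).Nonempty ∧ r ∉ U

/-- Quasi-bipartite: no edge joins two Steiner vertices. -/
def QuasiBipartite (G : SimpleGraph V) (R : Set V) : Prop :=
  ∀ u v : V, G.Adj u v → u ∈ R ∨ v ∈ R

/-- No edge joins two terminals. -/
def NoTerminalEdges (G : SimpleGraph V) (R : Set V) : Prop :=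
  ∀ u v : V, G.Adj u v → u ∉ R ∨ v ∉ R

/-- Intersecting supermodular function on subsets of `R`. -/
def IntersectingSupermodular (R : Set V) (f : Set V → ℝ) : Prop :=
  ∀ A B : Set V, A ⊆ R → B ⊆ R → (A ∩ B).Nonempty →
    f A + f B ≤ f (A ∩ B) + f (A ∪ B)

/-- Feasibility for (BCR_f). -/
def BCRfFeasible (G : SimpleGraph V) (R : Set V) (r : V) (f : Set V → ℝ)
    (x : V × V → ℝ) : Prop :=
  (∀ a, 0 ≤ x a) ∧ ∀ U : Set V, Valid R r U → f (U ∩ R) ≤ cutx G x U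

/-- Feasibility for (DCR_f). -/
def DCRfFeasible (G : SimpleGraph V) (R : Set V) (r : V) (f : Set V → ℝ)
    (y : DirFullComp G R → ℝ) : Prop :=
  (∀ K, 0 ≤ y K) ∧ ∀ U : Set V, U.Nonempty → U ⊆ R \ {r} → f U ≤ cuty G R y U

/-- Feasibility for (BCR). -/
def BCRFeasible (G : SimpleGraph V) (R : Set V) (r : V) (x : V × V → ℝ) : Prop :=
  BCRfFeasible G R r (fun _ => 1) x

/-- Feasibility for (DCR). -/
def DCRFeasible (G : SimpleGraph V) (R : Set V) (r : V) (y : DirFullComp G R → ℝ) : Prop :=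
  DCRfFeasible G R r (fun _ => 1) y

/-- The (BCR) objective `∑_{a ∈ A} c_a x_a`. -/
def BCRCost (G : SimpleGraph V) (c : V → V → ℝ) (x : V × V → ℝ) : ℝ :=
  ∑ᶠ a ∈ arcSet G, c a.1 a.2 * x a

/-- The (DCR) objective `∑_{K ∈ 𝒦} c_K y_K`. -/
def DCRCost (G : SimpleGraph V) (R : Set V) (c : V → V → ℝ)
    (y : DirFullComp G R → ℝ) : ℝ :=
  ∑ᶠ K : DirFullComp G R, K.cost c * y K

/-- The linear map `Φ(y) = ∑_K y_K · χ_K`. -/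
def Phi (G : SimpleGraph V) (R : Set V) (y : DirFullComp G R → ℝ) : V × V → ℝ :=
  fun a => ∑ᶠ K : DirFullComp G R, y K * K.chi a

/-- A minimal feasible solution of (BCR_f): feasible, and decreasing any single
coordinate by any positive amount destroys feasibility. -/
def BCRfMinimal (G : SimpleGraph V) (R : Set V) (r : V) (f : Set V → ℝ)
    (x : V × V → ℝ) : Prop :=
  BCRfFeasible G R r f x ∧
    ∀ a : V × V, ∀ ε : ℝ, 0 < ε →
      ¬ BCRfFeasible G R r f (Function.update x a (x a - ε))

/-- A minimal feasible solution of (BCR). -/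
def BCRMinimal (G : SimpleGraph V) (R : Set V) (r : V) (x : V × V → ℝ) : Prop :=
  BCRfMinimal G R r (fun _ => 1) x

/-- Membership in the polyhedron `𝓘`. -/
def memI (G : SimpleGraph V) (R : Set V) (r : V) (x : V × V → ℝ)
    (y : DirFullComp G R → ℝ) : Prop :=
  (∀ a, 0 ≤ x a) ∧ (∀ K, 0 ≤ y K) ∧
    ∀ U : Set V, Valid R r U → 1 ≤ cutx G x U + cuty G R y U

/-- A valid set that is tight for `(x, y) ∈ 𝓘`. -/
def TightFor (G : SimpleGraph V) (R : Set V) (r : V) (x : V × V → ℝ)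
    (y : DirFullComp G R → ℝ) (U : Set V) : Prop :=
  Valid R r U ∧ cutx G x U + cuty G R y U = 1

/-- A directed full component `K` is feasible w.r.t. `(x, y) ∈ 𝓘` if some positive
weight can be shifted from the arcs of `K` onto `K` while staying in `𝓘`. -/
def FeasibleComp (G : SimpleGraph V) (R : Set V) (r : V) (x : V × V → ℝ)
    (y : DirFullComp G R → ℝ) (K : DirFullComp G R) : Prop :=
  ∃ lam : ℝ, 0 < lam ∧
    memI G R r (x - lam • K.chi) (y + lam • (Pi.single K 1 : DirFullComp G R → ℝ))

/-- The set `𝒞` of eligible source nodes for centre `v` and sink `u`. -/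
def Cset (G : SimpleGraph V) (R : Set V) (r : V) (x : V × V → ℝ)
    (y : DirFullComp G R → ℝ) (v u : V) : Set V :=
  {w | G.Adj v w ∧ w ≠ u ∧
    ¬ ∃ U : Set V, TightFor G R r x y U ∧ u ∈ U ∧ w ∈ U ∧ v ∉ U}

/-- The family `𝒳`. -/
def Xfam (G : SimpleGraph V) (R : Set V) (r : V) (x : V × V → ℝ)
    (y : DirFullComp G R → ℝ) (v u : V) : Set (Set V) :=
  {S | ∃ X : Set V, TightFor G R r x y X ∧ u ∉ X ∧ v ∉ X ∧
    S = X ∩ Cset G R r x y v u}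

/-- The family `𝒴`. -/
def Yfam (G : SimpleGraph V) (R : Set V) (r : V) (x : V × V → ℝ)
    (y : DirFullComp G R → ℝ) (v u : V) : Set (Set V) :=
  {S | ∃ Y : Set V, TightFor G R r x y Y ∧ v ∈ Y ∧ u ∉ Y ∧
    S = Y ∩ Cset G R r x y v u}

/-- `𝒳*`: inclusion-wise maximal members of `𝒳`. -/
def XStar (G : SimpleGraph V) (R : Set V) (r : V) (x : V × V → ℝ)
    (y : DirFullComp G R → ℝ) (v u : V) : Set (Set V) :=
  {X ∈ Xfam G R r x y v u | ∀ X' ∈ Xfam G R r x y v u, X ⊆ X' → X' = X}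

/-- `𝒴*`: inclusion-wise minimal members of `𝒴`. -/
def YStar (G : SimpleGraph V) (R : Set V) (r : V) (x : V × V → ℝ)
    (y : DirFullComp G R → ℝ) (v u : V) : Set (Set V) :=
  {Y ∈ Yfam G R r x y v u | ∀ Y' ∈ Yfam G R r x y v u, Y' ⊆ Y → Y' = Y}

/-- The index set of the dual (DCR_f^D): nonempty subsets of `R ∖ {r}`. -/
def dualIndex (R : Set V) (r : V) : Set (Set V) :=
  {U : Set V | U.Nonempty ∧ U ⊆ R \ {r}}

/-- Feasibility for the dual (DCR_f^D). -/
def DualFeasible (G : SimpleGraph V) (R : Set V) (r : V) (c : V → V → ℝ)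
    (z : Set V → ℝ) : Prop :=
  (∀ U, 0 ≤ z U) ∧ (∀ U : Set V, U ∉ dualIndex R r → z U = 0) ∧
    ∀ K : DirFullComp G R,
      ∑ᶠ U ∈ dualIndex R r, K.cross01 U * z U ≤ K.cost c

/-- Objective `f^T z` of the dual (DCR_f^D). -/
def DualObj (R : Set V) (r : V) (f : Set V → ℝ) (z : Set V → ℝ) : ℝ :=
  ∑ᶠ U ∈ dualIndex R r, f U * z U

section Helpers

set_option linter.unusedSectionVars false

variable {G : SimpleGraph V} {R : Set V}

/-- Number of arcs of `K` in `δ⁺(U)`, as a real number. -/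
def nArcs (K : DirFullComp G R) (U : Set V) : ℝ :=
  (((outArcs G U).toFinite.toFinset) ∩ K.arcs).card

lemma mem_outArcs {U : Set V} {a : V × V} :
    a ∈ outArcs G U ↔ G.Adj a.1 a.2 ∧ a.1 ∈ U ∧ a.2 ∉ U := Iff.rfl

lemma nArcs_nonneg (K : DirFullComp G R) (U : Set V) : 0 ≤ nArcs K U :=
  Nat.cast_nonneg _

lemma one_le_nArcs {K : DirFullComp G R} {U : Set V} {a : V × V}
    (h1 : a ∈ outArcs G U) (h2 : a ∈ K.arcs) : 1 ≤ nArcs K U := by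
  have hm : a ∈ ((outArcs G U).toFinite.toFinset) ∩ K.arcs :=
    Finset.mem_inter.mpr ⟨(Set.Finite.mem_toFinset _).mpr h1, h2⟩
  have := Finset.card_pos.mpr ⟨a, hm⟩
  rw [nArcs]; exact_mod_cast this

lemma two_le_nArcs {K : DirFullComp G R} {U : Set V} {a b : V × V}
    (hab : a ≠ b) (ha1 : a ∈ outArcs G U) (ha2 : a ∈ K.arcs)
    (hb1 : b ∈ outArcs G U) (hb2 : b ∈ K.arcs) : 2 ≤ nArcs K U := by
  have h : 1 < (((outArcs G U).toFinite.toFinset) ∩ K.arcs).card :=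
    Finset.one_lt_card.mpr
      ⟨a, Finset.mem_inter.mpr ⟨(Set.Finite.mem_toFinset _).mpr ha1, ha2⟩,
       b, Finset.mem_inter.mpr ⟨(Set.Finite.mem_toFinset _).mpr hb1, hb2⟩, hab⟩
  rw [nArcs]; exact_mod_cast h

lemma nArcs_le_one {K : DirFullComp G R} {U : Set V} {a₀ : V × V}
    (h : ∀ a ∈ K.arcs, a ∈ outArcs G U → a = a₀) : nArcs K U ≤ 1 := by
  have hc : (((outArcs G U).toFinite.toFinset) ∩ K.arcs).card ≤ 1 := by
    apply Finset.card_le_one.mpr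
    intro a ha b hb
    rw [Finset.mem_inter, Set.Finite.mem_toFinset] at ha hb
    rw [h a ha.2 ha.1, h b hb.2 hb.1]
  rw [nArcs]; exact_mod_cast hc

lemma nArcs_eq_zero {K : DirFullComp G R} {U : Set V}
    (h : ∀ a ∈ K.arcs, a ∉ outArcs G U) : nArcs K U = 0 := by
  have hc : ((outArcs G U).toFinite.toFinset) ∩ K.arcs = ∅ := by
    apply Finset.eq_empty_of_forall_notMem
    intro a ha
    rw [Finset.mem_inter, Set.Finite.mem_toFinset] at ha
    exact h a ha.2 ha.1
  rw [nArcs, hc]; simp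

lemma cross01_nonneg (K : DirFullComp G R) (U : Set V) : 0 ≤ K.cross01 U := by
  unfold DirFullComp.cross01; split_ifs <;> norm_num

lemma cross01_le_one (K : DirFullComp G R) (U : Set V) : K.cross01 U ≤ 1 := by
  unfold DirFullComp.cross01; split_ifs <;> norm_num

lemma cross01_eq_one {K : DirFullComp G R} {U : Set V} (h : K.crosses U) :
    K.cross01 U = 1 := if_pos h

lemma crosses_of_one_le_cross01 {K : DirFullComp G R} {U : Set V}
    (h : 1 ≤ K.cross01 U) : K.crosses U := by
  by_contra hc
  rw [DirFullComp.cross01, if_neg hc] at h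
  norm_num at h

lemma cutx_apply (x : V × V → ℝ) (U : Set V) :
    cutx G x U = ∑ a ∈ (outArcs G U).toFinite.toFinset, x a := by
  rw [cutx, finsum_mem_eq_finite_toFinset_sum _ (outArcs G U).toFinite]

lemma sum_chi (K : DirFullComp G R) (s : Finset (V × V)) :
    ∑ a ∈ s, K.chi a = ((s ∩ K.arcs).card : ℝ) := by
  calc ∑ a ∈ s, K.chi a = ∑ a ∈ s, (if a ∈ K.arcs then (1 : ℝ) else 0) := rfl
    _ = ∑ a ∈ s ∩ K.arcs, (1 : ℝ) := Finset.sum_ite_mem s K.arcs _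
    _ = ((s ∩ K.arcs).card : ℝ) := by simp

lemma cutx_sub (K : DirFullComp G R) (x : V × V → ℝ) (lam : ℝ) (U : Set V) :
    cutx G (x - lam • K.chi) U = cutx G x U - lam * nArcs K U := by
  rw [cutx_apply, cutx_apply, nArcs, ← sum_chi K]
  simp only [Pi.sub_apply, Pi.smul_apply, smul_eq_mul]
  rw [Finset.sum_sub_distrib, Finset.mul_sum]

lemma cuty_apply (y : DirFullComp G R → ℝ) (U : Set V) :
    cuty G R y U =
      ∑ K' ∈ ({K' : DirFullComp G R | K'.crosses U}).toFinite.toFinset, y K' := by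
  rw [cuty,
    finsum_mem_eq_finite_toFinset_sum _ ({K' : DirFullComp G R | K'.crosses U}).toFinite]

lemma cuty_add (K : DirFullComp G R) (y : DirFullComp G R → ℝ) (lam : ℝ) (U : Set V) :
    cuty G R (y + lam • (Pi.single K 1 : DirFullComp G R → ℝ)) U
      = cuty G R y U + lam * K.cross01 U := by
  rw [cuty_apply, cuty_apply]
  simp only [Pi.add_apply, Pi.smul_apply, smul_eq_mul]
  rw [Finset.sum_add_distrib, ← Finset.mul_sum]
  congr 2
  have h1 : ∀ K' : DirFullComp G R,
      (Pi.single K 1 : DirFullComp G R → ℝ) K' = if K' = K then (1:ℝ) else 0 := by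
    intro K'; exact Pi.single_apply K (1:ℝ) K'
  simp only [h1]
  rw [Finset.sum_ite_eq' _ K (fun _ => (1 : ℝ))]
  rw [DirFullComp.cross01]
  simp [Set.Finite.mem_toFinset]

lemma cut_shift (K : DirFullComp G R) (x : V × V → ℝ) (y : DirFullComp G R → ℝ)
    (lam : ℝ) (U : Set V) :
    cutx G (x - lam • K.chi) U
        + cuty G R (y + lam • (Pi.single K 1 : DirFullComp G R → ℝ)) U
      = cutx G x U + cuty G R y U - lam * (nArcs K U - K.cross01 U) := by
  rw [cutx_sub, cuty_add]; ring

lemma centre_mem {K : DirFullComp G R} {v : V} (hK : K.IsCentre v) :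
    v ∈ K.H.verts := by
  have hv : v ∈ K.H.verts \ R := by rw [hK]; exact rfl
  exact hv.1

lemma centre_not_terminal {K : DirFullComp G R} {v : V} (hK : K.IsCentre v) :
    v ∉ R := by
  have hv : v ∈ K.H.verts \ R := by rw [hK]; exact rfl
  exact hv.2

lemma terminal_adj_centre (hnt : NoTerminalEdges G R) {K : DirFullComp G R} {v w : V}
    (hK : K.IsCentre v) (hw : w ∈ K.H.verts) (hwR : w ∈ R) : K.H.Adj w v := by
  obtain ⟨n, hn⟩ := Set.ncard_eq_one.mp ((K.leaf_iff w hw).mp hwR)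
  have hadj : K.H.Adj w n := by
    have : n ∈ K.H.neighborSet w := by rw [hn]; exact rfl
    exact this
  have hnv : n = v := by
    have hnV : n ∈ K.H.verts := hadj.snd_mem
    have hnR : n ∉ R := by
      rcases hnt w n hadj.adj_sub with h | h
      · exact absurd hwR h
      · exact h
    have : n ∈ K.H.verts \ R := ⟨hnV, hnR⟩
    rw [hK] at this
    exact this
  exact hnv ▸ hadj

lemma arc_vu (hnt : NoTerminalEdges G R) {K : DirFullComp G R} {v u : V}
    (hK : K.IsCentre v) (hsink : K.sink = u) : (v, u) ∈ K.arcs := by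
  have huV : u ∈ K.H.verts := hsink ▸ K.sink_mem
  have huR : u ∈ R := hsink ▸ K.sink_terminal
  have hadj : K.H.Adj u v := terminal_adj_centre hnt hK huV huR
  rcases K.arcs_total u v hadj with h | h
  · exact absurd h (hsink ▸ K.sink_no_out v)
  · exact h

lemma mem_sources_iff {K : DirFullComp G R} {w : V} :
    w ∈ K.sources ↔ (w ∈ K.H.verts ∧ w ∈ R) ∧ w ≠ K.sink := by
  simp [DirFullComp.sources]

lemma mem_arcs_iff (hnt : NoTerminalEdges G R) {K : DirFullComp G R} {v u : V}
    (hK : K.IsCentre v) (hsink : K.sink = u) {a : V × V} :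
    a ∈ K.arcs ↔ a = (v, u) ∨ (a.1 ∈ K.sources ∧ a.2 = v) := by
  have hv : v ∉ R := centre_not_terminal hK
  have hvsink : v ≠ K.sink := fun h => hv (h ▸ K.sink_terminal)
  constructor
  · intro ha
    have hH : K.H.Adj a.1 a.2 := K.arcs_adj a ha
    have hne : a.1 ≠ a.2 := hH.adj_sub.ne
    rcases hnt a.1 a.2 hH.adj_sub with h1 | h2
    · -- a.1 ∉ R, so a.1 = v
      have ha1 : a.1 = v := by
        have : a.1 ∈ K.H.verts \ R := ⟨hH.fst_mem, h1⟩
        rw [hK] at this; exact this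
      left
      obtain ⟨w₀, hw₀, huniq⟩ := K.toward_sink v (centre_mem hK) hvsink
      have hu1 : u = w₀ := huniq u (arc_vu hnt hK hsink)
      have hu2 : a.2 = w₀ := huniq a.2 (by rw [← ha1]; exact ha)
      rw [← ha1, hu1, ← hu2]
    · -- a.2 ∉ R, so a.2 = v
      have ha2 : a.2 = v := by
        have : a.2 ∈ K.H.verts \ R := ⟨hH.snd_mem, h2⟩
        rw [hK] at this; exact this
      right
      refine ⟨?_, ha2⟩
      have ha1R : a.1 ∈ R := by
        by_contra h1
        have : a.1 ∈ K.H.verts \ R := ⟨hH.fst_mem, h1⟩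
        rw [hK] at this
        exact hne (by rw [this, ha2])
      have ha1s : a.1 ≠ K.sink := by
        intro h
        exact K.sink_no_out a.2 (by rw [← h]; exact ha)
      exact mem_sources_iff.mpr ⟨⟨hH.fst_mem, ha1R⟩, ha1s⟩
  · rintro (rfl | ⟨hs, h2⟩)
    · exact arc_vu hnt hK hsink
    · obtain ⟨⟨hwV, hwR⟩, hwsink⟩ := mem_sources_iff.mp hs
      have hadj : K.H.Adj a.1 v := terminal_adj_centre hnt hK hwV hwR
      rcases K.arcs_total a.1 v hadj with h | h
      · have : a = (a.1, a.2) := rfl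
        rw [this, h2]; exact h
      · exfalso
        obtain ⟨w₀, hw₀, huniq⟩ := K.toward_sink v (centre_mem hK) hvsink
        have h1 : a.1 = w₀ := huniq a.1 h
        have h2' : u = w₀ := huniq u (arc_vu hnt hK hsink)
        exact hwsink (by rw [h1, ← h2', hsink])

lemma source_adj_centre (hnt : NoTerminalEdges G R) {K : DirFullComp G R} {v w : V}
    (hK : K.IsCentre v) (hw : w ∈ K.sources) : G.Adj w v := by
  obtain ⟨⟨hwV, hwR⟩, _⟩ := mem_sources_iff.mp hw
  exact (terminal_adj_centre hnt hK hwV hwR).adj_sub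

end Helpers

theorem stmt9
    (G : SimpleGraph V) (R : Set V) (r : V) (hr : r ∈ R)
    (hqb : QuasiBipartite G R) (hnt : NoTerminalEdges G R)
    (x : V × V → ℝ) (y : DirFullComp G R → ℝ) (hxy : memI G R r x y)
    (v u : V) (hv : v ∉ R) (hu : u ∈ R) (hadj : G.Adj v u)
    (K : DirFullComp G R) (hK : K.IsCentre v) (hsink : K.sink = u) :
    FeasibleComp G R r x y K ↔
      ((∀ a ∈ K.arcs, 0 < x a) ∧
        K.sources ⊆ Cset G R r x y v u ∧
        (∀ X ∈ Xfam G R r x y v u, (K.sources ∩ X).Subsingleton) ∧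
        (∀ Y ∈ Yfam G R r x y v u, (K.sources ∩ Y).Nonempty)) := by
  constructor
  · rintro ⟨lam, hlam, hx', hy', hcut'⟩
    have key : ∀ U : Set V, TightFor G R r x y U → nArcs K U ≤ K.cross01 U := by
      intro U hU
      have h1 := hcut' U hU.1
      rw [cut_shift, hU.2] at h1
      by_contra hlt
      push_neg at hlt
      have := mul_pos hlam (sub_pos.mpr hlt)
      linarith
    have hxpos : ∀ a ∈ K.arcs, 0 < x a := by
      intro a haK
      have h0 := hx' a
      have hchi : K.chi a = 1 := if_pos haK
      simp only [Pi.sub_apply, Pi.smul_apply, smul_eq_mul, hchi] at h0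
      linarith
    have hsrcC : K.sources ⊆ Cset G R r x y v u := by
      intro w hw
      have hadjwv : G.Adj w v := source_adj_centre hnt hK hw
      have hwu : w ≠ u := by
        have h := (mem_sources_iff.mp hw).2
        rw [hsink] at h; exact h
      simp only [Cset, Set.mem_setOf_eq]
      refine ⟨hadjwv.symm, hwu, ?_⟩
      rintro ⟨U, hUt, huU, hwU, hvU⟩
      have h1 : (w, v) ∈ K.arcs := (mem_arcs_iff hnt hK hsink).mpr (Or.inr ⟨hw, rfl⟩)
      have h2 : (w, v) ∈ outArcs G U := ⟨hadjwv, hwU, hvU⟩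
      have h3 := one_le_nArcs h2 h1
      have h4 := key U hUt
      have h5 : ¬ K.crosses U := fun hcr => hcr.1 (by rw [hsink]; exact huU)
      rw [DirFullComp.cross01, if_neg h5] at h4
      linarith
    have hXss : ∀ X ∈ Xfam G R r x y v u, (K.sources ∩ X).Subsingleton := by
      rintro X ⟨X', hX't, huX', hvX', rfl⟩ w1 hw1 w2 hw2
      by_contra hne
      have ha1 : (w1, v) ∈ K.arcs := (mem_arcs_iff hnt hK hsink).mpr (Or.inr ⟨hw1.1, rfl⟩)
      have ha2 : (w2, v) ∈ K.arcs := (mem_arcs_iff hnt hK hsink).mpr (Or.inr ⟨hw2.1, rfl⟩)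
      have ho1 : (w1, v) ∈ outArcs G X' := ⟨source_adj_centre hnt hK hw1.1, hw1.2.1, hvX'⟩
      have ho2 : (w2, v) ∈ outArcs G X' := ⟨source_adj_centre hnt hK hw2.1, hw2.2.1, hvX'⟩
      have h2 := two_le_nArcs (fun h => hne (Prod.ext_iff.mp h).1) ho1 ha1 ho2 ha2
      have h4 := key X' hX't
      have h5 := cross01_le_one K X'
      linarith
    have hYne : ∀ Y ∈ Yfam G R r x y v u, (K.sources ∩ Y).Nonempty := by
      rintro Y ⟨Y', hY't, hvY', huY', rfl⟩
      have h1 : (v, u) ∈ K.arcs := arc_vu hnt hK hsink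
      have h2 : (v, u) ∈ outArcs G Y' := ⟨hadj, hvY', huY'⟩
      have h3 := one_le_nArcs h2 h1
      have h4 := key Y' hY't
      have h5 : K.crosses Y' := crosses_of_one_le_cross01 (le_trans h3 h4)
      obtain ⟨w, hws, hwY'⟩ := h5.2
      exact ⟨w, hws, hwY', hsrcC hws⟩
    exact ⟨hxpos, hsrcC, hXss, hYne⟩
  · rintro ⟨ha, hb, hc, hd⟩
    have key2 : ∀ U : Set V, TightFor G R r x y U → nArcs K U ≤ K.cross01 U := by
      intro U hU
      by_cases hvU : v ∈ U
      · by_cases huU : u ∈ U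
        · have h0 : nArcs K U = 0 := by
            apply nArcs_eq_zero
            intro a haK hout
            rcases (mem_arcs_iff hnt hK hsink).mp haK with h | ⟨hs, h2⟩
            · exact hout.2.2 (by rw [h]; exact huU)
            · exact hout.2.2 (by rw [h2]; exact hvU)
          rw [h0]; exact cross01_nonneg K U
        · have hY : (U ∩ Cset G R r x y v u) ∈ Yfam G R r x y v u :=
            ⟨U, hU, hvU, huU, rfl⟩
          obtain ⟨w, hw⟩ := hd _ hY
          have hcr : K.crosses U := ⟨by rw [hsink]; exact huU, ⟨w, hw.1, hw.2.1⟩⟩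
          rw [cross01_eq_one hcr]
          apply nArcs_le_one (a₀ := (v, u))
          intro a haK hout
          rcases (mem_arcs_iff hnt hK hsink).mp haK with h | ⟨hs, h2⟩
          · exact h
          · exact absurd (by rw [h2]; exact hvU : a.2 ∈ U) hout.2.2
      · by_cases huU : u ∈ U
        · have h0 : nArcs K U = 0 := by
            apply nArcs_eq_zero
            intro a haK hout
            rcases (mem_arcs_iff hnt hK hsink).mp haK with h | ⟨hs, h2⟩
            · exact hvU (by rw [h] at hout; exact hout.2.1)
            · exact (hb hs).2.2 ⟨U, hU, huU, hout.2.1, hvU⟩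
          rw [h0]; exact cross01_nonneg K U
        · by_cases hsrc : (K.sources ∩ U).Nonempty
          · obtain ⟨w, hwS, hwU⟩ := hsrc
            have hcr : K.crosses U := ⟨by rw [hsink]; exact huU, ⟨w, hwS, hwU⟩⟩
            rw [cross01_eq_one hcr]
            apply nArcs_le_one (a₀ := (w, v))
            intro a haK hout
            rcases (mem_arcs_iff hnt hK hsink).mp haK with h | ⟨hs, h2⟩
            · exact absurd (by rw [h] at hout; exact hout.2.1 : v ∈ U) hvU
            · have hX : (U ∩ Cset G R r x y v u) ∈ Xfam G R r x y v u :=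
                ⟨U, hU, huU, hvU, rfl⟩
              have heq : a.1 = w := hc _ hX ⟨hs, hout.2.1, hb hs⟩ ⟨hwS, hwU, hb hwS⟩
              calc a = (a.1, a.2) := rfl
                _ = (w, v) := by rw [heq, h2]
          · have h0 : nArcs K U = 0 := by
              apply nArcs_eq_zero
              intro a haK hout
              rcases (mem_arcs_iff hnt hK hsink).mp haK with h | ⟨hs, h2⟩
              · exact hvU (by rw [h] at hout; exact hout.2.1)
              · exact hsrc ⟨a.1, hs, hout.2.1⟩
            rw [h0]; exact cross01_nonneg K U
    have harcs_ne : K.arcs.Nonempty := ⟨(v, u), arc_vu hnt hK hsink⟩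
    have hlam0 : 0 < K.arcs.inf' harcs_ne x := (Finset.lt_inf'_iff harcs_ne).mpr ha
    haveI : Fintype (Set V) := Fintype.ofFinite _
    set T : Finset (Set V) :=
      Finset.univ.filter (fun U => Valid R r U ∧ K.cross01 U < nArcs K U) with hT
    have hgpos : ∀ U ∈ T,
        0 < (cutx G x U + cuty G R y U - 1) / (nArcs K U - K.cross01 U) := by
      intro U hUT
      rw [hT, Finset.mem_filter] at hUT
      obtain ⟨-, hUv, hUlt⟩ := hUT
      have h1 : 1 ≤ cutx G x U + cuty G R y U := hxy.2.2 U hUv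
      have h2 : cutx G x U + cuty G R y U ≠ 1 := fun h =>
        absurd (key2 U ⟨hUv, h⟩) (not_le.mpr hUlt)
      exact div_pos (by cases lt_or_eq_of_le h1 with
        | inl h => linarith
        | inr h => exact absurd h.symm h2) (sub_pos.mpr hUlt)
    have hex : ∃ lam : ℝ, 0 < lam ∧ (∀ a ∈ K.arcs, lam ≤ x a) ∧
        ∀ U ∈ T, lam ≤ (cutx G x U + cuty G R y U - 1) / (nArcs K U - K.cross01 U) := by
      rcases Finset.eq_empty_or_nonempty T with hTe | hTne
      · exact ⟨K.arcs.inf' harcs_ne x, hlam0,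
          fun a haK => Finset.inf'_le x haK,
          fun U hU => absurd hU (by rw [hTe]; exact Finset.notMem_empty U)⟩
      · refine ⟨min (K.arcs.inf' harcs_ne x)
          (T.inf' hTne fun U => (cutx G x U + cuty G R y U - 1) / (nArcs K U - K.cross01 U)),
          ?_, ?_, ?_⟩
        · exact lt_min hlam0 ((Finset.lt_inf'_iff hTne).mpr hgpos)
        · exact fun a haK => le_trans (min_le_left _ _) (Finset.inf'_le x haK)
        · exact fun U hU => le_trans (min_le_right _ _) (Finset.inf'_le _ hU)
    obtain ⟨lam, hlam, hlamx, hlamg⟩ := hex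
    refine ⟨lam, hlam, ?_, ?_, ?_⟩
    · intro a
      simp only [Pi.sub_apply, Pi.smul_apply, smul_eq_mul]
      by_cases haK : a ∈ K.arcs
      · have hchi : K.chi a = 1 := if_pos haK
        rw [hchi]
        have := hlamx a haK; linarith
      · have hchi : K.chi a = 0 := if_neg haK
        rw [hchi]
        have := hxy.1 a; linarith
    · intro K'
      simp only [Pi.add_apply, Pi.smul_apply, smul_eq_mul]
      have h1 := hxy.2.1 K'
      have h2 : (0:ℝ) ≤ (Pi.single K 1 : DirFullComp G R → ℝ) K' := by
        rw [Pi.single_apply K (1:ℝ) K']; split_ifs <;> norm_num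
      have := mul_nonneg hlam.le h2
      linarith
    · intro U hUv
      rw [cut_shift]
      have h1 : 1 ≤ cutx G x U + cuty G R y U := hxy.2.2 U hUv
      by_cases hle : nArcs K U ≤ K.cross01 U
      · have hmn : lam * (nArcs K U - K.cross01 U) ≤ 0 :=
          mul_nonpos_iff.mpr (Or.inl ⟨hlam.le, sub_nonpos.mpr hle⟩)
        linarith
      · have hUT : U ∈ T := by
          rw [hT, Finset.mem_filter]
          exact ⟨Finset.mem_univ _, hUv, not_le.mp hle⟩
        have h2 := hlamg U hUT
        have h3 : 0 < nArcs K U - K.cross01 U := sub_pos.mpr (not_le.mp hle)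
        rw [le_div_iff₀ h3] at h2
        linarith
end
end

section
/- If X₁, X₂ ∈ 𝒳 and X₁ ∩ X₂ ≠ ∅, then X₁∩X₂ ∈ 𝒳 and X₁∪X₂ ∈ 𝒳; likewise, if Y₁, Y₂ ∈ 𝒴 and Y₁ ∩ Y₂ ≠ ∅, then Y₁∩Y₂ ∈ 𝒴 and Y₁∪Y₂ ∈ 𝒴. -/
open Classical

noncomputable section

variable {V : Type*} [Fintype V] [DecidableEq V]

instance dfcFintype (G : SimpleGraph V) (R : Set V) : Fintype (DirFullComp G R) :=
  Fintype.ofFinite _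

lemma cutx_eq (G : SimpleGraph V) (x : V × V → ℝ) (U : Set V) :
    cutx G x U = ∑ a : V × V, if a ∈ outArcs G U then x a else 0 := by
  rw [cutx, finsum_mem_def, finsum_eq_sum_of_fintype]
  simp [Set.indicator_apply]

lemma cuty_eq (G : SimpleGraph V) (R : Set V) (y : DirFullComp G R → ℝ) (U : Set V) :
    cuty G R y U = ∑ K : DirFullComp G R, if K.crosses U then y K else 0 := by
  rw [cuty, finsum_mem_def, finsum_eq_sum_of_fintype]
  simp [Set.indicator_apply]

lemma cutx_submod (G : SimpleGraph V) (x : V × V → ℝ) (hx : ∀ a, 0 ≤ x a) (A B : Set V) :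
    cutx G x (A ∩ B) + cutx G x (A ∪ B) ≤ cutx G x A + cutx G x B := by
  simp only [cutx_eq]
  rw [← Finset.sum_add_distrib, ← Finset.sum_add_distrib]
  apply Finset.sum_le_sum
  intro a _
  have hxa := hx a
  simp only [outArcs, Set.mem_setOf_eq, Set.mem_inter_iff, Set.mem_union]
  split_ifs <;> first | linarith | (exfalso; tauto)

lemma cuty_submod (G : SimpleGraph V) (R : Set V) (y : DirFullComp G R → ℝ)
    (hy : ∀ K, 0 ≤ y K) (A B : Set V) :
    cuty G R y (A ∩ B) + cuty G R y (A ∪ B) ≤ cuty G R y A + cuty G R y B := by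
  simp only [cuty_eq]
  rw [← Finset.sum_add_distrib, ← Finset.sum_add_distrib]
  apply Finset.sum_le_sum
  intro K _
  have hyK := hy K
  have h1 : K.crosses (A ∩ B) → K.crosses (A ∪ B) → K.crosses A ∧ K.crosses B := by
    rintro ⟨hs1, w, hw1⟩ ⟨hs2, -⟩
    simp only [Set.mem_inter_iff, Set.mem_union] at hs2 hw1
    push_neg at hs2
    exact ⟨⟨hs2.1, w, hw1.1, hw1.2.1⟩, ⟨hs2.2, w, hw1.1, hw1.2.2⟩⟩
  have h2 : K.crosses (A ∩ B) → K.crosses A ∨ K.crosses B := by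
    rintro ⟨hs1, w, hw1⟩
    simp only [Set.mem_inter_iff] at hs1 hw1
    by_cases hA : K.sink ∈ A
    · exact Or.inr ⟨fun hB => hs1 ⟨hA, hB⟩, w, hw1.1, hw1.2.2⟩
    · exact Or.inl ⟨hA, w, hw1.1, hw1.2.1⟩
  have h3 : K.crosses (A ∪ B) → K.crosses A ∨ K.crosses B := by
    rintro ⟨hs1, w, hw1⟩
    simp only [Set.mem_inter_iff, Set.mem_union] at hs1 hw1
    push_neg at hs1
    rcases hw1.2 with h | h
    · exact Or.inl ⟨hs1.1, w, hw1.1, h⟩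
    · exact Or.inr ⟨hs1.2, w, hw1.1, h⟩
  split_ifs <;> first | linarith | (exfalso; tauto)

lemma uncross (G : SimpleGraph V) (R : Set V) (r : V) (x : V × V → ℝ)
    (y : DirFullComp G R → ℝ) (hxy : memI G R r x y) {A B : Set V}
    (hA : TightFor G R r x y A) (hB : TightFor G R r x y B)
    (hI : Valid R r (A ∩ B)) (hU : Valid R r (A ∪ B)) :
    TightFor G R r x y (A ∩ B) ∧ TightFor G R r x y (A ∪ B) := by
  obtain ⟨hx, hy, hfeas⟩ := hxy
  have f1 := hfeas _ hI
  have f2 := hfeas _ hU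
  have s1 := cutx_submod G x hx A B
  have s2 := cuty_submod G R y hy A B
  have e1 := hA.2
  have e2 := hB.2
  exact ⟨⟨hI, by linarith⟩, ⟨hU, by linarith⟩⟩


theorem stmt11
    (G : SimpleGraph V) (R : Set V) (r : V) (hr : r ∈ R)
    (hqb : QuasiBipartite G R) (hnt : NoTerminalEdges G R)
    (x : V × V → ℝ) (y : DirFullComp G R → ℝ) (hxy : memI G R r x y)
    (v u : V) (hv : v ∉ R) (hu : u ∈ R) (hadj : G.Adj v u) :
    (∀ X₁ ∈ Xfam G R r x y v u, ∀ X₂ ∈ Xfam G R r x y v u, (X₁ ∩ X₂).Nonempty →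
        X₁ ∩ X₂ ∈ Xfam G R r x y v u ∧ X₁ ∪ X₂ ∈ Xfam G R r x y v u) ∧
      ∀ Y₁ ∈ Yfam G R r x y v u, ∀ Y₂ ∈ Yfam G R r x y v u, (Y₁ ∩ Y₂).Nonempty →
        Y₁ ∩ Y₂ ∈ Yfam G R r x y v u ∧ Y₁ ∪ Y₂ ∈ Yfam G R r x y v u := by
  have hCR : Cset G R r x y v u ⊆ R := by
    intro w hw
    rcases hw with ⟨hadj', -, -⟩
    rcases hqb v w hadj' with h | h
    · exact absurd h hv
    · exact h
  constructor
  · rintro X₁ ⟨X, hX, huX, hvX, rfl⟩ X₂ ⟨X', hX', huX', hvX', rfl⟩ hne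
    obtain ⟨w, hw⟩ := hne
    have hvalI : Valid R r (X ∩ X') :=
      ⟨⟨w, ⟨hw.1.1, hw.2.1⟩, hCR hw.1.2⟩, fun h => hX.1.2 h.1⟩
    obtain ⟨t, htXR⟩ := hX.1.1
    have hvalU : Valid R r (X ∪ X') :=
      ⟨⟨t, Or.inl htXR.1, htXR.2⟩, by rintro (h | h); exacts [hX.1.2 h, hX'.1.2 h]⟩
    obtain ⟨hTI, hTU⟩ := uncross G R r x y hxy hX hX' hvalI hvalU
    constructor
    · exact ⟨X ∩ X', hTI, fun h => huX h.1, fun h => hvX h.1, by ext a; constructor <;> (intro h; simp only [Set.mem_inter_iff] at *; tauto)⟩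
    · refine ⟨X ∪ X', hTU, by rintro (h | h); exacts [huX h, huX' h],
        by rintro (h | h); exacts [hvX h, hvX' h], ?_⟩
      ext a
      constructor <;> (intro h; simp only [Set.mem_inter_iff, Set.mem_union] at *; tauto)
  · rintro Y₁ ⟨Y, hY, hvY, huY, rfl⟩ Y₂ ⟨Y', hY', hvY', huY', rfl⟩ hne
    obtain ⟨w, hw⟩ := hne
    have hvalI : Valid R r (Y ∩ Y') :=
      ⟨⟨w, ⟨hw.1.1, hw.2.1⟩, hCR hw.1.2⟩, fun h => hY.1.2 h.1⟩
    obtain ⟨t, htYR⟩ := hY.1.1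
    have hvalU : Valid R r (Y ∪ Y') :=
      ⟨⟨t, Or.inl htYR.1, htYR.2⟩, by rintro (h | h); exacts [hY.1.2 h, hY'.1.2 h]⟩
    obtain ⟨hTI, hTU⟩ := uncross G R r x y hxy hY hY' hvalI hvalU
    constructor
    · exact ⟨Y ∩ Y', hTI, ⟨hvY, hvY'⟩, fun h => huY h.1, by ext a; constructor <;> (intro h; simp only [Set.mem_inter_iff] at *; tauto)⟩
    · refine ⟨Y ∪ Y', hTU, Or.inl hvY,
        by rintro (h | h); exacts [huY h, huY' h], ?_⟩
      ext a
      constructor <;> (intro h; simp only [Set.mem_inter_iff, Set.mem_union] at *; tauto)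
end
end

section
/- The inclusion-wise maximal members of 𝒳 are pairwise disjoint, and the inclusion-wise minimal members of 𝒴 are pairwise disjoint. -/
open Classical

noncomputable section

variable {V : Type*} [Fintype V] [DecidableEq V]

lemma crosses_union_cases {G : SimpleGraph V} {R : Set V} {K : DirFullComp G R}
    {A B : Set V} (h : K.crosses (A ∪ B)) : K.crosses A ∨ K.crosses B := by
  obtain ⟨hs, s, hsrc, hsU⟩ := h
  rcases hsU with hsA | hsB
  · exact Or.inl ⟨fun h => hs (Or.inl h), s, hsrc, hsA⟩
  · exact Or.inr ⟨fun h => hs (Or.inr h), s, hsrc, hsB⟩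

lemma crosses_inter_cases {G : SimpleGraph V} {R : Set V} {K : DirFullComp G R}
    {A B : Set V} (h : K.crosses (A ∩ B)) : K.crosses A ∨ K.crosses B := by
  obtain ⟨hs, s, hsrc, hsA, hsB⟩ := h
  by_cases hA : K.sink ∈ A
  · exact Or.inr ⟨fun h => hs ⟨hA, h⟩, s, hsrc, hsB⟩
  · exact Or.inl ⟨hA, s, hsrc, hsA⟩

lemma crosses_both {G : SimpleGraph V} {R : Set V} {K : DirFullComp G R}
    {A B : Set V} (h1 : K.crosses (A ∩ B)) (h2 : K.crosses (A ∪ B)) :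
    K.crosses A ∧ K.crosses B := by
  obtain ⟨hs, s, hsrc, hsA, hsB⟩ := h1
  obtain ⟨hs', _⟩ := h2
  exact ⟨⟨fun h => hs' (Or.inl h), s, hsrc, hsA⟩, ⟨fun h => hs' (Or.inr h), s, hsrc, hsB⟩⟩

lemma cutx_eq_sum (G : SimpleGraph V) (x : V × V → ℝ) (U : Set V) :
    cutx G x U = ∑ a : V × V, Set.indicator (outArcs G U) x a := by
  rw [cutx, finsum_mem_def, finsum_eq_sum_of_fintype]

lemma cuty_eq_sum (G : SimpleGraph V) (R : Set V) (y : DirFullComp G R → ℝ)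
    (U : Set V) [Fintype (DirFullComp G R)] :
    cuty G R y U = ∑ K : DirFullComp G R,
      Set.indicator {K : DirFullComp G R | K.crosses U} y K := by
  rw [cuty, finsum_mem_def, finsum_eq_sum_of_fintype]

lemma submod (G : SimpleGraph V) (R : Set V) (x : V × V → ℝ)
    (y : DirFullComp G R → ℝ) (hx : ∀ a, 0 ≤ x a) (hy : ∀ K, 0 ≤ y K)
    (A B : Set V) :
    (cutx G x (A ∩ B) + cuty G R y (A ∩ B)) +
      (cutx G x (A ∪ B) + cuty G R y (A ∪ B)) ≤
    (cutx G x A + cuty G R y A) + (cutx G x B + cuty G R y B) := by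
  haveI : Fintype (DirFullComp G R) := Fintype.ofFinite _
  rw [cutx_eq_sum, cutx_eq_sum, cutx_eq_sum, cutx_eq_sum,
    cuty_eq_sum, cuty_eq_sum, cuty_eq_sum, cuty_eq_sum]
  have hX : ∑ a : V × V, Set.indicator (outArcs G (A ∩ B)) x a +
      ∑ a : V × V, Set.indicator (outArcs G (A ∪ B)) x a ≤
      ∑ a : V × V, Set.indicator (outArcs G A) x a +
      ∑ a : V × V, Set.indicator (outArcs G B) x a := by
    rw [← Finset.sum_add_distrib, ← Finset.sum_add_distrib]
    apply Finset.sum_le_sum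
    intro a _
    by_cases hadj : G.Adj a.1 a.2
    · by_cases h1 : a.1 ∈ A <;> by_cases h2 : a.1 ∈ B <;>
        by_cases h3 : a.2 ∈ A <;> by_cases h4 : a.2 ∈ B <;>
        simp [Set.indicator_apply, outArcs, hadj, h1, h2, h3, h4, hx a]
    · simp [Set.indicator_apply, outArcs, hadj]
  have hY : ∑ K : DirFullComp G R,
      Set.indicator {K : DirFullComp G R | K.crosses (A ∩ B)} y K +
      ∑ K : DirFullComp G R,
      Set.indicator {K : DirFullComp G R | K.crosses (A ∪ B)} y K ≤
      ∑ K : DirFullComp G R,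
      Set.indicator {K : DirFullComp G R | K.crosses A} y K +
      ∑ K : DirFullComp G R,
      Set.indicator {K : DirFullComp G R | K.crosses B} y K := by
    rw [← Finset.sum_add_distrib, ← Finset.sum_add_distrib]
    apply Finset.sum_le_sum
    intro K _
    simp only [Set.indicator_apply, Set.mem_setOf_eq]
    by_cases cA : K.crosses A <;> by_cases cB : K.crosses B
    · have h1 : (if K.crosses (A ∩ B) then y K else 0) ≤ y K := by
        split_ifs <;> simp [hy K]
      have h2 : (if K.crosses (A ∪ B) then y K else 0) ≤ y K := by
        split_ifs <;> simp [hy K]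
      simp only [cA, cB, if_pos]; linarith
    · have hni : ¬ (K.crosses (A ∩ B) ∧ K.crosses (A ∪ B)) := by
        rintro ⟨h1, h2⟩; exact cB (crosses_both h1 h2).2
      by_cases hI : K.crosses (A ∩ B) <;> by_cases hU : K.crosses (A ∪ B) <;>
        simp [hI, hU, cA, cB, hy K] at hni ⊢
    · have hni : ¬ (K.crosses (A ∩ B) ∧ K.crosses (A ∪ B)) := by
        rintro ⟨h1, h2⟩; exact cA (crosses_both h1 h2).1
      by_cases hI : K.crosses (A ∩ B) <;> by_cases hU : K.crosses (A ∪ B) <;>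
        simp [hI, hU, cA, cB, hy K] at hni ⊢
    · have hI : ¬ K.crosses (A ∩ B) := fun h =>
        (crosses_inter_cases h).elim cA cB
      have hU : ¬ K.crosses (A ∪ B) := fun h =>
        (crosses_union_cases h).elim cA cB
      simp [hI, hU, cA, cB]
  linarith

/-- Uncrossing: if two tight sets have a common terminal, their union and
intersection are both tight. -/
lemma tight_uncross {G : SimpleGraph V} {R : Set V} {r : V}
    {x : V × V → ℝ} {y : DirFullComp G R → ℝ} (hxy : memI G R r x y)
    {A B : Set V} (hA : TightFor G R r x y A) (hB : TightFor G R r x y B)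
    (hne : ((A ∩ B) ∩ R).Nonempty) :
    TightFor G R r x y (A ∩ B) ∧ TightFor G R r x y (A ∪ B) := by
  obtain ⟨hx, hy, hfeas⟩ := hxy
  obtain ⟨⟨hAne, hAr⟩, hAt⟩ := hA
  obtain ⟨⟨hBne, hBr⟩, hBt⟩ := hB
  have hIv : Valid R r (A ∩ B) := ⟨hne, fun h => hAr h.1⟩
  have hUv : Valid R r (A ∪ B) := by
    refine ⟨?_, fun h => h.elim hAr hBr⟩
    obtain ⟨t, htA, htR⟩ := hAne
    exact ⟨t, Or.inl htA, htR⟩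
  have hI1 := hfeas _ hIv
  have hU1 := hfeas _ hUv
  have hsub := submod G R x y hx hy A B
  rw [hAt, hBt] at hsub
  exact ⟨⟨hIv, by linarith⟩, ⟨hUv, by linarith⟩⟩

lemma Cset_subset_R {G : SimpleGraph V} {R : Set V} {r : V}
    {x : V × V → ℝ} {y : DirFullComp G R → ℝ} {v u : V}
    (hqb : QuasiBipartite G R) (hv : v ∉ R) :
    Cset G R r x y v u ⊆ R := by
  rintro w ⟨hadj, -, -⟩
  exact ((hqb v w hadj).resolve_left hv)

theorem stmt12
    (G : SimpleGraph V) (R : Set V) (r : V) (hr : r ∈ R)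
    (hqb : QuasiBipartite G R) (hnt : NoTerminalEdges G R)
    (x : V × V → ℝ) (y : DirFullComp G R → ℝ) (hxy : memI G R r x y)
    (v u : V) (hv : v ∉ R) (hu : u ∈ R) (hadj : G.Adj v u) :
    (∀ X₁ ∈ XStar G R r x y v u, ∀ X₂ ∈ XStar G R r x y v u, X₁ ≠ X₂ →
        Disjoint X₁ X₂) ∧
      ∀ Y₁ ∈ YStar G R r x y v u, ∀ Y₂ ∈ YStar G R r x y v u, Y₁ ≠ Y₂ →
        Disjoint Y₁ Y₂ := by
  have hCR := Cset_subset_R (r := r) (x := x) (y := y) (u := u) hqb hv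
  constructor
  · rintro S₁ ⟨⟨X₁, hX₁t, hX₁u, hX₁v, rfl⟩, hmax₁⟩
      S₂ ⟨⟨X₂, hX₂t, hX₂u, hX₂v, rfl⟩, hmax₂⟩ hne
    by_contra hdis
    obtain ⟨w, ⟨hw1, hwC⟩, hw2, -⟩ := Set.not_disjoint_iff.mp hdis
    have hnewR : ((X₁ ∩ X₂) ∩ R).Nonempty := ⟨w, ⟨hw1, hw2⟩, hCR hwC⟩
    obtain ⟨-, hUt⟩ := tight_uncross hxy hX₁t hX₂t hnewR
    have hmem : (X₁ ∪ X₂) ∩ Cset G R r x y v u ∈ Xfam G R r x y v u :=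
      ⟨X₁ ∪ X₂, hUt, fun h => h.elim hX₁u hX₂u, fun h => h.elim hX₁v hX₂v, rfl⟩
    have h1 := hmax₁ _ hmem (Set.inter_subset_inter_left _ Set.subset_union_left)
    have h2 := hmax₂ _ hmem (Set.inter_subset_inter_left _ Set.subset_union_right)
    exact hne (h1 ▸ h2)
  · rintro S₁ ⟨⟨Y₁, hY₁t, hY₁v, hY₁u, rfl⟩, hmin₁⟩
      S₂ ⟨⟨Y₂, hY₂t, hY₂v, hY₂u, rfl⟩, hmin₂⟩ hne
    by_contra hdis
    obtain ⟨w, ⟨hw1, hwC⟩, hw2, -⟩ := Set.not_disjoint_iff.mp hdis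
    have hnewR : ((Y₁ ∩ Y₂) ∩ R).Nonempty := ⟨w, ⟨hw1, hw2⟩, hCR hwC⟩
    obtain ⟨hIt, -⟩ := tight_uncross hxy hY₁t hY₂t hnewR
    have hmem : (Y₁ ∩ Y₂) ∩ Cset G R r x y v u ∈ Yfam G R r x y v u :=
      ⟨Y₁ ∩ Y₂, hIt, ⟨hY₁v, hY₂v⟩, fun h => hY₁u h.1, rfl⟩
    have h1 := hmin₁ _ hmem (Set.inter_subset_inter_left _ Set.inter_subset_left)
    have h2 := hmin₂ _ hmem (Set.inter_subset_inter_left _ Set.inter_subset_right)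
    exact hne (h1 ▸ h2)
end
end
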